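/- arXiv:1504.03794 — 3 statements merged into one kernel-verified Lean document; each statement's English description precedes it below -/
import Mathlib

section
/- Let k be a field and l ≥ 2. Every element of Sp(2l,k) can be written as a finite product of elementary symplectic matrices x_{i,j}(t) = I + t(e_{i,j} − e_{−j,−i}) (i ≠ j), x_{i,−j}(t) = I + t(e_{i,−j} + e_{j,−i}) (i < j), x_{−i,j}(t) = I + t(e_{−i,j} + e_{−j,i}) (i < j), x_{i,−i}(t) = I + t·e_{i,−i}, x_{−i,i}(t) = I + t·e_{−i,i}. -/
open Matrix

/-- An elementary symplectic matrix of Sp(2l,k), rows indexed {1,…,l} ⊕ {-1,…,-l}. -/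
def IsElementarySymplectic (k : Type*) [Field k] (l : ℕ)
    (x : Matrix (Fin l ⊕ Fin l) (Fin l ⊕ Fin l) k) : Prop :=
  (∃ (i j : Fin l) (t : k), i ≠ j ∧
      x = 1 + t • (Matrix.single (Sum.inl i) (Sum.inl j) 1
        - Matrix.single (Sum.inr j) (Sum.inr i) 1)) ∨
  (∃ (i j : Fin l) (t : k), i < j ∧
      x = 1 + t • (Matrix.single (Sum.inl i) (Sum.inr j) 1
        + Matrix.single (Sum.inl j) (Sum.inr i) 1)) ∨
  (∃ (i j : Fin l) (t : k), i < j ∧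
      x = 1 + t • (Matrix.single (Sum.inr i) (Sum.inl j) 1
        + Matrix.single (Sum.inr j) (Sum.inl i) 1)) ∨
  (∃ (i : Fin l) (t : k), x = 1 + t • Matrix.single (Sum.inl i) (Sum.inr i) 1) ∨
  (∃ (i : Fin l) (t : k), x = 1 + t • Matrix.single (Sum.inr i) (Sum.inl i) 1)

/-!
Write `e_i, f_i` for the basis vectors `Pi.single (inl i) 1, Pi.single (inr i) 1`. We argue by
induction on a set `T` of indices such that `g` fixes `e_i` and `f_i` for every `i ∉ T`. Such a
symplectic `g` also preserves the coordinates `±i`, `i ∉ T`, of every vector, since they are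
`±ω(e_i, ·)`, `±ω(f_i, ·)`. For `m ∈ T`, the vector `g e_m` is therefore nonzero and supported on
the pairs of `T`, and elementary matrices with indices in `T` carry it to `e_m`: make its
`-m` coordinate nonzero, clear every other pair `±j` against that pivot, and finish inside the
`SL₂` of the pair `±m`. Then the `-m` coordinate of `g f_m` is `ω(e_m, g f_m) = 1`, and the same
clearing, by elementary matrices that fix `e_m`, carries `g f_m` to `f_m`. Since
`x(t)⁻¹ = x(-t)`, the elementary matrices generate a monoid closed under inverses, so `g` lies in it.
-/

open Sum

namespace Matrix

section Fixing

variable {n R : Type*} [Fintype n] [DecidableEq n] [CommRing R]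

def fixingSubmonoid (C : Set n) : Submonoid (Matrix n n R) where
  carrier := {h | ∀ c ∈ C, h *ᵥ Pi.single c 1 = Pi.single c 1}
  mul_mem' ha hb c hc := by rw [← mulVec_mulVec, hb c hc, ha c hc]
  one_mem' c _ := one_mulVec _

lemma eq_one_of_mem_fixingSubmonoid_univ {h : Matrix n n R}
    (hh : h ∈ fixingSubmonoid (Set.univ : Set n)) : h = 1 :=
  ext_of_mulVec_single fun c => by rw [hh c trivial, one_mulVec]

lemma single_one_mulVec (a b : n) (v : n → R) : single a b 1 *ᵥ v = Pi.single a (v b) := by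
  rw [single_mulVec, one_mul]; rfl

lemma one_add_neg_smul_mul_one_add_smul {N : Matrix n n R} (hN : N * N = 0) (t : R) :
    (1 + (-t) • N) * (1 + t • N) = 1 := by
  simp only [add_mul, mul_add, one_mul, mul_one, smul_mul_smul_comm, hN, smul_zero, add_zero]
  rw [neg_smul, neg_add_cancel_right]

end Fixing

section Outside

variable {ι : Type*}

def outside (T : Finset ι) : Set (ι ⊕ ι) := {c | Sum.elim (· ∉ T) (· ∉ T) c}

@[simp] lemma inl_mem_outside {i : ι} {T : Finset ι} : inl i ∈ outside T ↔ i ∉ T := Iff.rfl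

@[simp] lemma inr_mem_outside {i : ι} {T : Finset ι} : inr i ∈ outside T ↔ i ∉ T := Iff.rfl

lemma swap_mem_outside {c : ι ⊕ ι} {T : Finset ι} : c.swap ∈ outside T ↔ c ∈ outside T := by
  rcases c with i | i <;> rfl

lemma outside_anti {T T' : Finset ι} (h : T ⊆ T') : outside T' ⊆ outside T := by
  rintro (i | i) hi <;> exact fun hT => hi (h hT)

end Outside

section Symplectic

variable {ι R : Type*} [Fintype ι] [DecidableEq ι] [CommRing R]

lemma J_mul_apply_inl (M : Matrix (ι ⊕ ι) (ι ⊕ ι) R) (i : ι) (s : ι ⊕ ι) :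
    (J ι R * M) (inl i) s = -M (inr i) s := by
  simp [J, mul_apply, Fintype.sum_sum_type, one_apply]

lemma J_mul_apply_inr (M : Matrix (ι ⊕ ι) (ι ⊕ ι) R) (i : ι) (s : ι ⊕ ι) :
    (J ι R * M) (inr i) s = M (inl i) s := by
  simp [J, mul_apply, Fintype.sum_sum_type, one_apply]

lemma J_mul_single_inl (i : ι) (b : ι ⊕ ι) (c : R) :
    J ι R * single (inl i) b c = single (inr i) b c := by
  ext (r | r) s <;> simp [J_mul_apply_inl, J_mul_apply_inr, single_apply]

lemma J_mul_single_inr (i : ι) (b : ι ⊕ ι) (c : R) :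
    J ι R * single (inr i) b c = -single (inl i) b c := by
  ext (r | r) s <;> simp [J_mul_apply_inl, J_mul_apply_inr, single_apply]

lemma J_mulVec_inl (v : ι ⊕ ι → R) (i : ι) : (J ι R *ᵥ v) (inl i) = -v (inr i) := by
  simp [J, fromBlocks_mulVec, neg_mulVec]

lemma J_mulVec_inr (v : ι ⊕ ι → R) (i : ι) : (J ι R *ᵥ v) (inr i) = v (inl i) := by
  simp [J, fromBlocks_mulVec]

lemma one_add_smul_mem_symplecticGroup {N : Matrix (ι ⊕ ι) (ι ⊕ ι) R}
    (hN : (J ι R * N)ᵀ = J ι R * N) (hN2 : N * N = 0) (t : R) :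
    1 + t • N ∈ symplecticGroup ι R := by
  have hNJ : Nᵀ * J ι R = -(J ι R * N) := by
    rw [← hN, transpose_mul, J_transpose, mul_neg, neg_neg]
  rw [SymplecticGroup.mem_iff', transpose_add, transpose_one, transpose_smul]
  simp only [add_mul, mul_add, one_mul, mul_one, smul_mul_assoc, mul_smul_comm, hNJ,
    neg_mul, mul_assoc, hN2, mul_zero, smul_neg, smul_zero, neg_zero, add_zero]
  abel

lemma mulVec_apply_swap_of_mem_symplecticGroup {g : Matrix (ι ⊕ ι) (ι ⊕ ι) R}
    (hg : g ∈ symplecticGroup ι R) {c : ι ⊕ ι} (hc : g *ᵥ Pi.single c 1 = Pi.single c 1)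
    (v : ι ⊕ ι → R) : (g *ᵥ v) c.swap = v c.swap := by
  have key : (J ι R *ᵥ (g *ᵥ v)) c = (J ι R *ᵥ v) c :=
    calc (J ι R *ᵥ (g *ᵥ v)) c = (g *ᵥ Pi.single c 1) ⬝ᵥ (J ι R *ᵥ (g *ᵥ v)) := by
          rw [hc, single_one_dotProduct]
      _ = Pi.single c 1 ⬝ᵥ ((gᵀ * J ι R * g) *ᵥ v) := by
          rw [dotProduct_comm, dotProduct_mulVec, ← mulVec_transpose, dotProduct_comm,
            mulVec_mulVec, mulVec_mulVec, Matrix.mul_assoc]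
      _ = (J ι R *ᵥ v) c := by rw [SymplecticGroup.mem_iff'.1 hg, single_one_dotProduct]
  rcases c with i | i
  · simpa [J_mulVec_inl] using key
  · simpa [J_mulVec_inr] using key

lemma mulVec_apply_of_mem_outside {g : Matrix (ι ⊕ ι) (ι ⊕ ι) R}
    (hg : g ∈ symplecticGroup ι R) {T : Finset ι} (hfix : g ∈ fixingSubmonoid (outside T))
    {c : ι ⊕ ι} (hc : c ∈ outside T) (v : ι ⊕ ι → R) : (g *ᵥ v) c = v c := by
  simpa using mulVec_apply_swap_of_mem_symplecticGroup hg (hfix _ (swap_mem_outside.2 hc)) v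

lemma mulVec_single_apply_of_mem_outside {g : Matrix (ι ⊕ ι) (ι ⊕ ι) R}
    (hg : g ∈ symplecticGroup ι R) {T : Finset ι} (hfix : g ∈ fixingSubmonoid (outside T))
    {b : ι ⊕ ι} (hb : b ∉ outside T) {c : ι ⊕ ι} (hc : c ∈ outside T) :
    (g *ᵥ Pi.single b 1) c = 0 := by
  rw [mulVec_apply_of_mem_outside hg hfix hc, Pi.single_eq_of_ne (ne_of_mem_of_not_mem hc hb)]

end Symplectic

section Elementary

variable {ι R : Type*} [Fintype ι] [DecidableEq ι] [CommRing R] (i j : ι) (t : R)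

/- The paper's `x_{i,j}(t), x_{i,-j}(t), x_{-i,j}(t), x_{i,-i}(t), x_{-i,i}(t)`; `L` and `R` refer to
the blocks `inl` (indices `1, …, l`) and `inr` (indices `-1, …, -l`). -/
def xLL : Matrix (ι ⊕ ι) (ι ⊕ ι) R :=
  1 + t • (single (inl i) (inl j) 1 - single (inr j) (inr i) 1)

def xLR : Matrix (ι ⊕ ι) (ι ⊕ ι) R :=
  1 + t • (single (inl i) (inr j) 1 + single (inl j) (inr i) 1)

def xRL : Matrix (ι ⊕ ι) (ι ⊕ ι) R :=
  1 + t • (single (inr i) (inl j) 1 + single (inr j) (inl i) 1)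

def xLRSelf : Matrix (ι ⊕ ι) (ι ⊕ ι) R := 1 + t • single (inl i) (inr i) 1

def xRLSelf : Matrix (ι ⊕ ι) (ι ⊕ ι) R := 1 + t • single (inr i) (inl i) 1

variable (v : ι ⊕ ι → R)

lemma xLL_mulVec : xLL i j t *ᵥ v =
    v + t • (Pi.single (inl i) (v (inl j)) - Pi.single (inr j) (v (inr i))) := by
  rw [xLL, add_mulVec, one_mulVec, smul_mulVec, sub_mulVec, single_one_mulVec, single_one_mulVec]

lemma xLR_mulVec : xLR i j t *ᵥ v =
    v + t • (Pi.single (inl i) (v (inr j)) + Pi.single (inl j) (v (inr i))) := by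
  rw [xLR, add_mulVec, one_mulVec, smul_mulVec, add_mulVec, single_one_mulVec, single_one_mulVec]

lemma xRL_mulVec : xRL i j t *ᵥ v =
    v + t • (Pi.single (inr i) (v (inl j)) + Pi.single (inr j) (v (inl i))) := by
  rw [xRL, add_mulVec, one_mulVec, smul_mulVec, add_mulVec, single_one_mulVec, single_one_mulVec]

lemma xLRSelf_mulVec : xLRSelf i t *ᵥ v = v + t • Pi.single (inl i) (v (inr i)) := by
  rw [xLRSelf, add_mulVec, one_mulVec, smul_mulVec, single_one_mulVec]

lemma xRLSelf_mulVec : xRLSelf i t *ᵥ v = v + t • Pi.single (inr i) (v (inl i)) := by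
  rw [xRLSelf, add_mulVec, one_mulVec, smul_mulVec, single_one_mulVec]

lemma xLRSelf_mulVec_pair (a b : R) :
    xLRSelf i t *ᵥ (Pi.single (inl i) a + Pi.single (inr i) b) =
      Pi.single (inl i) (a + t * b) + Pi.single (inr i) b := by
  ext (c | c) <;> simp [xLRSelf_mulVec, Pi.single_apply]
  split_ifs <;> ring

lemma xRLSelf_mulVec_pair (a b : R) :
    xRLSelf i t *ᵥ (Pi.single (inl i) a + Pi.single (inr i) b) =
      Pi.single (inl i) a + Pi.single (inr i) (b + t * a) := by
  ext (c | c) <;> simp [xRLSelf_mulVec, Pi.single_apply]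
  split_ifs <;> ring

end Elementary

end Matrix

section ElementarySubmonoid

variable {k : Type*} [Field k] {l : ℕ}

variable (k l) in
def elementarySubmonoid : Submonoid (Matrix (Fin l ⊕ Fin l) (Fin l ⊕ Fin l) k) :=
  Submonoid.closure {x | IsElementarySymplectic k l x}

lemma IsElementarySymplectic.exists_eq_one_add_smul
    {x : Matrix (Fin l ⊕ Fin l) (Fin l ⊕ Fin l) k} (hx : IsElementarySymplectic k l x) :
    ∃ (t : k) (N : Matrix (Fin l ⊕ Fin l) (Fin l ⊕ Fin l) k), x = 1 + t • N ∧ N * N = 0 ∧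
      (J (Fin l) k * N)ᵀ = J (Fin l) k * N ∧ ∀ s : k, IsElementarySymplectic k l (1 + s • N) := by
  rcases hx with ⟨i, j, t, hij, rfl⟩ | ⟨i, j, t, hij, rfl⟩ | ⟨i, j, t, hij, rfl⟩ | ⟨i, t, rfl⟩ |
    ⟨i, t, rfl⟩
  · refine ⟨t, _, rfl, ?_, ?_, fun s => Or.inl ⟨i, j, s, hij, rfl⟩⟩
    · simp [sub_mul, mul_sub, hij, Ne.symm hij]
    · simp only [mul_sub, J_mul_single_inl, J_mul_single_inr]
      simp [transpose_single, add_comm]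
  · refine ⟨t, _, rfl, ?_, ?_, fun s => Or.inr (Or.inl ⟨i, j, s, hij, rfl⟩)⟩
    · simp [add_mul, mul_add]
    · simp only [mul_add, J_mul_single_inl]
      simp [transpose_single, add_comm]
  · refine ⟨t, _, rfl, ?_, ?_, fun s => Or.inr (Or.inr (Or.inl ⟨i, j, s, hij, rfl⟩))⟩
    · simp [add_mul, mul_add]
    · simp only [mul_add, J_mul_single_inr]
      simp [transpose_single, add_comm]
  · refine ⟨t, _, rfl, ?_, ?_, fun s => Or.inr (Or.inr (Or.inr (Or.inl ⟨i, s, rfl⟩)))⟩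
    · simp
    · simp only [J_mul_single_inl]
      simp [transpose_single]
  · refine ⟨t, _, rfl, ?_, ?_, fun s => Or.inr (Or.inr (Or.inr (Or.inr ⟨i, s, rfl⟩)))⟩
    · simp
    · simp only [J_mul_single_inr]
      simp [transpose_single]

lemma elementarySubmonoid_le_symplecticGroup :
    elementarySubmonoid k l ≤ symplecticGroup (Fin l) k :=
  Submonoid.closure_le.2 fun _ hx => by
    obtain ⟨t, N, rfl, hN2, hN, -⟩ := IsElementarySymplectic.exists_eq_one_add_smul hx
    exact one_add_smul_mem_symplecticGroup hN hN2 t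

lemma exists_mul_eq_one_of_mem_elementarySubmonoid
    {h : Matrix (Fin l ⊕ Fin l) (Fin l ⊕ Fin l) k} (hh : h ∈ elementarySubmonoid k l) :
    ∃ h' ∈ elementarySubmonoid k l, h' * h = 1 := by
  induction hh using Submonoid.closure_induction with
  | mem x hx =>
    obtain ⟨t, N, rfl, hN2, -, hfam⟩ := IsElementarySymplectic.exists_eq_one_add_smul hx
    exact ⟨_, Submonoid.subset_closure (hfam (-t)), one_add_neg_smul_mul_one_add_smul hN2 t⟩
  | one => exact ⟨1, one_mem _, one_mul 1⟩
  | mul a b _ _ ha hb =>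
    obtain ⟨a', ha', ha'a⟩ := ha
    obtain ⟨b', hb', hb'b⟩ := hb
    refine ⟨b' * a', mul_mem hb' ha', ?_⟩
    rw [Matrix.mul_assoc, ← Matrix.mul_assoc a', ha'a, Matrix.one_mul, hb'b]

variable {C : Set (Fin l ⊕ Fin l)} {i j : Fin l}

lemma xLL_mem (hij : i ≠ j) (hj : inl j ∉ C) (hi : inr i ∉ C) (t : k) :
    xLL i j t ∈ elementarySubmonoid k l ⊓ fixingSubmonoid C :=
  ⟨Submonoid.subset_closure (Or.inl ⟨i, j, t, hij, rfl⟩), fun c hc => by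
    rw [xLL_mulVec]; simp [ne_of_mem_of_not_mem hc hj, ne_of_mem_of_not_mem hc hi]⟩

lemma xLR_mem (hij : i ≠ j) (hj : inr j ∉ C) (hi : inr i ∉ C) (t : k) :
    xLR i j t ∈ elementarySubmonoid k l ⊓ fixingSubmonoid C := by
  refine ⟨?_, fun c hc => by
    rw [xLR_mulVec]; simp [ne_of_mem_of_not_mem hc hj, ne_of_mem_of_not_mem hc hi]⟩
  rcases hij.lt_or_gt with h | h
  · exact Submonoid.subset_closure (Or.inr (Or.inl ⟨i, j, t, h, rfl⟩))
  · rw [xLR, add_comm (single _ _ _)]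
    exact Submonoid.subset_closure (Or.inr (Or.inl ⟨j, i, t, h, rfl⟩))

lemma xRL_mem (hij : i ≠ j) (hj : inl j ∉ C) (hi : inl i ∉ C) (t : k) :
    xRL i j t ∈ elementarySubmonoid k l ⊓ fixingSubmonoid C := by
  refine ⟨?_, fun c hc => by
    rw [xRL_mulVec]; simp [ne_of_mem_of_not_mem hc hj, ne_of_mem_of_not_mem hc hi]⟩
  rcases hij.lt_or_gt with h | h
  · exact Submonoid.subset_closure (Or.inr (Or.inr (Or.inl ⟨i, j, t, h, rfl⟩)))
  · rw [xRL, add_comm (single _ _ _)]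
    exact Submonoid.subset_closure (Or.inr (Or.inr (Or.inl ⟨j, i, t, h, rfl⟩)))

lemma xLRSelf_mem (hi : inr i ∉ C) (t : k) :
    xLRSelf i t ∈ elementarySubmonoid k l ⊓ fixingSubmonoid C :=
  ⟨Submonoid.subset_closure (Or.inr (Or.inr (Or.inr (Or.inl ⟨i, t, rfl⟩)))), fun c hc => by
    rw [xLRSelf_mulVec]; simp [ne_of_mem_of_not_mem hc hi]⟩

lemma xRLSelf_mem (hi : inl i ∉ C) (t : k) :
    xRLSelf i t ∈ elementarySubmonoid k l ⊓ fixingSubmonoid C :=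
  ⟨Submonoid.subset_closure (Or.inr (Or.inr (Or.inr (Or.inr ⟨i, t, rfl⟩)))), fun c hc => by
    rw [xRLSelf_mulVec]; simp [ne_of_mem_of_not_mem hc hi]⟩

end ElementarySubmonoid

section Reduction

variable {k : Type*} [Field k] {l : ℕ}

def Reachable (C : Set (Fin l ⊕ Fin l)) (v w : Fin l ⊕ Fin l → k) : Prop :=
  ∃ h ∈ elementarySubmonoid k l ⊓ fixingSubmonoid C, h *ᵥ v = w

namespace Reachable

variable {C C' : Set (Fin l ⊕ Fin l)} {u v w : Fin l ⊕ Fin l → k}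

lemma refl (C : Set (Fin l ⊕ Fin l)) (v : Fin l ⊕ Fin l → k) : Reachable C v v :=
  ⟨1, one_mem _, one_mulVec v⟩

lemma of_mem {x : Matrix (Fin l ⊕ Fin l) (Fin l ⊕ Fin l) k}
    (hx : x ∈ elementarySubmonoid k l ⊓ fixingSubmonoid C) (v : Fin l ⊕ Fin l → k) :
    Reachable C v (x *ᵥ v) :=
  ⟨x, hx, rfl⟩

lemma trans (huv : Reachable C u v) (hvw : Reachable C v w) : Reachable C u w := by
  obtain ⟨a, ha, rfl⟩ := huv
  obtain ⟨b, hb, rfl⟩ := hvw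
  exact ⟨b * a, mul_mem hb ha, (mulVec_mulVec _ _ _).symm⟩

lemma mono (h : C' ⊆ C) (hvw : Reachable C v w) : Reachable C' v w := by
  obtain ⟨a, ⟨haE, haC⟩, rfl⟩ := hvw
  exact ⟨a, ⟨haE, fun c hc => haC c (h hc)⟩, rfl⟩

lemma apply_eq {T : Finset (Fin l)} (hvw : Reachable (outside T) v w) {c : Fin l ⊕ Fin l}
    (hc : c ∈ outside T) : w c = v c := by
  obtain ⟨a, ⟨haE, haC⟩, rfl⟩ := hvw
  exact mulVec_apply_of_mem_outside (elementarySubmonoid_le_symplecticGroup haE) haC hc v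

end Reachable

variable {C : Set (Fin l ⊕ Fin l)} {m : Fin l}

lemma exists_reachable_inr_ne_zero {T : Finset (Fin l)} (hm : m ∈ T) {v : Fin l ⊕ Fin l → k}
    (hv : v ≠ 0) (hsupp : ∀ c ∈ outside T, v c = 0) :
    ∃ w, Reachable (outside T) v w ∧ w (inr m) ≠ 0 := by
  rcases ne_or_eq (v (inr m)) 0 with hvm | hvm
  · exact ⟨v, .refl _ _, hvm⟩
  obtain ⟨c, hc⟩ := Function.ne_iff.1 hv
  have hcT : c ∉ outside T := fun h => hc (hsupp c h)
  rcases c with i | i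
  · have hi : i ∈ T := by simpa using hcT
    by_cases him : i = m
    · subst him
      refine ⟨_, .of_mem (xRLSelf_mem (by simpa) 1) v, ?_⟩
      simpa [xRLSelf_mulVec, hvm] using hc
    · refine ⟨_, .of_mem (xRL_mem (Ne.symm him) (by simpa) (by simpa) 1) v, ?_⟩
      simpa [xRL_mulVec, hvm, him] using hc
  · have him : i ≠ m := by rintro rfl; exact hc hvm
    refine ⟨_, .of_mem (xLL_mem him (by simpa) (by simpa using hcT) 1) v, ?_⟩
    simpa [xLL_mulVec, hvm, him] using hc

/-- `xLL m j` kills the `-j` coordinate and then `xLR m j` the `j` coordinate, both against the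
pivot at `-m`. -/
lemma exists_reachable_clear_pair {j : Fin l} (hjm : j ≠ m) (hl : inl j ∉ C) (hr : inr j ∉ C)
    (hm : inr m ∉ C) {v : Fin l ⊕ Fin l → k} (hv : v (inr m) ≠ 0) :
    ∃ w, Reachable C v w ∧ w (inl j) = 0 ∧ w (inr j) = 0 ∧ w (inr m) = v (inr m) := by
  set v₁ := xLL m j (v (inr j) / v (inr m)) *ᵥ v
  have hv₁l : v₁ (inl j) = v (inl j) := by simp [v₁, xLL_mulVec, hjm]
  have hv₁r : v₁ (inr j) = 0 := by simp [v₁, xLL_mulVec, div_mul_cancel₀ _ hv]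
  have hv₁m : v₁ (inr m) = v (inr m) := by simp [v₁, xLL_mulVec, Ne.symm hjm]
  refine ⟨xLR m j (-v (inl j) / v (inr m)) *ᵥ v₁,
    (Reachable.of_mem (xLL_mem (Ne.symm hjm) hl hm _) v).trans
      (.of_mem (xLR_mem (Ne.symm hjm) hr hm _) v₁), ?_, ?_, ?_⟩
  · simp [xLR_mulVec, hjm, hv₁l, hv₁m, hv]
  · simp [xLR_mulVec, hv₁r]
  · simp [xLR_mulVec, hv₁m]


lemma reachable_single_inl_of_pair (hl : inl m ∉ C) (hr : inr m ∉ C) (a : k) {p : k}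
    (hp : p ≠ 0) :
    Reachable C (Pi.single (inl m) a + Pi.single (inr m) p) (Pi.single (inl m) (1 : k)) := by
  have h₁ := Reachable.of_mem (xLRSelf_mem hr ((1 - a) / p))
    (Pi.single (inl m) a + Pi.single (inr m) p)
  have h₂ := Reachable.of_mem (xRLSelf_mem hl (-p)) (Pi.single (inl m) (1 : k) + Pi.single (inr m) p)
  rw [xLRSelf_mulVec_pair, div_mul_cancel₀ _ hp, add_sub_cancel] at h₁
  rw [xRLSelf_mulVec_pair, mul_one, add_neg_cancel, Pi.single_zero, add_zero] at h₂
  exact h₁.trans h₂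

lemma reachable_single_inr_of_pair (hr : inr m ∉ C) (a : k) :
    Reachable C (Pi.single (inl m) a + Pi.single (inr m) 1) (Pi.single (inr m) (1 : k)) := by
  have h := Reachable.of_mem (xLRSelf_mem hr (-a)) (Pi.single (inl m) a + Pi.single (inr m) (1 : k))
  rwa [xLRSelf_mulVec_pair, mul_one, add_neg_cancel, Pi.single_zero, zero_add] at h

lemma exists_reachable_single_add_single (m : Fin l) (S : Finset (Fin l)) :
    ∀ v : Fin l ⊕ Fin l → k, v (inr m) ≠ 0 → (∀ c ∈ outside (insert m S), v c = 0) →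
      ∃ a, Reachable (insert (inl m) (outside (insert m S))) v
        (Pi.single (inl m) a + Pi.single (inr m) (v (inr m))) := by
  induction S using Finset.induction_on with
  | empty =>
    intro v _ hv
    refine ⟨v (inl m), ?_⟩
    convert Reachable.refl _ v using 1
    ext (c | c) <;> by_cases hc : c = m <;> simp [hc, hv]
  | insert j S _ ih =>
    intro v hvm hv
    by_cases hjm : j = m
    · subst hjm
      rw [Finset.insert_idem] at hv ⊢
      exact ih v hvm hv
    obtain ⟨w, hvw, hwl, hwr, hwm⟩ := exists_reachable_clear_pair hjm
      (C := insert (inl m) (outside (insert m (insert j S)))) (by simp [hjm]) (by simp) (by simp) hvm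
    have hw : ∀ c ∈ outside (insert m S), w c = 0 := by
      intro c hc
      by_cases hcj : c = inl j ∨ c = inr j
      · rcases hcj with rfl | rfl <;> assumption
      have hc' : c ∈ outside (insert m (insert j S)) := by
        rcases c with c | c <;> simp_all
      rw [(hvw.mono (Set.subset_insert _ _)).apply_eq hc', hv c hc']
    obtain ⟨a, hwa⟩ := ih w (hwm ▸ hvm) hw
    rw [hwm] at hwa
    exact ⟨a, hvw.trans (hwa.mono (Set.insert_subset_insert (outside_anti
      (Finset.insert_subset_insert _ (Finset.subset_insert _ _)))))⟩

lemma reachable_single_inl {S : Finset (Fin l)} {v : Fin l ⊕ Fin l → k} (hv : v ≠ 0)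
    (hsupp : ∀ c ∈ outside (insert m S), v c = 0) :
    Reachable (outside (insert m S)) v (Pi.single (inl m) 1) := by
  obtain ⟨w, hvw, hwm⟩ := exists_reachable_inr_ne_zero (Finset.mem_insert_self m S) hv hsupp
  have hw : ∀ c ∈ outside (insert m S), w c = 0 := fun c hc => by
    rw [hvw.apply_eq hc, hsupp c hc]
  obtain ⟨a, hwa⟩ := exists_reachable_single_add_single m S w hwm hw
  exact hvw.trans ((hwa.mono (Set.subset_insert _ _)).trans
    (reachable_single_inl_of_pair (by simp) (by simp) a hwm))

lemma reachable_single_inr {S : Finset (Fin l)} {v : Fin l ⊕ Fin l → k} (hv : v (inr m) = 1)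
    (hsupp : ∀ c ∈ outside (insert m S), v c = 0) :
    Reachable (insert (inl m) (outside (insert m S))) v (Pi.single (inr m) 1) := by
  obtain ⟨a, hva⟩ := exists_reachable_single_add_single m S v (by simp [hv]) hsupp
  rw [hv] at hva
  exact hva.trans (reachable_single_inr_of_pair (by simp) a)

end Reduction

lemma exists_mul_mem_fixingSubmonoid {k : Type*} [Field k] {l : ℕ} {m : Fin l}
    {S : Finset (Fin l)} {g : Matrix (Fin l ⊕ Fin l) (Fin l ⊕ Fin l) k}
    (hgSp : g ∈ symplecticGroup (Fin l) k) (hgfix : g ∈ fixingSubmonoid (outside (insert m S))) :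
    ∃ h ∈ elementarySubmonoid k l, h * g ∈ fixingSubmonoid (outside S) := by
  have hge : g *ᵥ Pi.single (inl m) 1 ≠ 0 := fun h => by
    have hinj := mulVec_injective_iff_isUnit.2
      ((isUnit_iff_isUnit_det g).2 (SymplecticGroup.symplectic_det hgSp))
    exact Pi.single_ne_zero_iff.2 one_ne_zero (hinj (h.trans (mulVec_zero g).symm))
  obtain ⟨h₁, ⟨hh₁E, hh₁fix⟩, hh₁⟩ := reachable_single_inl hge
    fun c => mulVec_single_apply_of_mem_outside hgSp hgfix (by simp)
  have hg₁Sp : h₁ * g ∈ symplecticGroup (Fin l) k :=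
    mul_mem (elementarySubmonoid_le_symplecticGroup hh₁E) hgSp
  have hg₁e : (h₁ * g) *ᵥ Pi.single (inl m) 1 = Pi.single (inl m) 1 := by
    rw [← mulVec_mulVec, hh₁]
  obtain ⟨h₂, ⟨hh₂E, hh₂fix⟩, hh₂⟩ := reachable_single_inr (S := S)
    (by simpa using mulVec_apply_swap_of_mem_symplecticGroup hg₁Sp hg₁e (Pi.single (inr m) 1))
    fun c => mulVec_single_apply_of_mem_outside hg₁Sp (mul_mem hh₁fix hgfix) (by simp)
  have hfix : h₂ * (h₁ * g) ∈ fixingSubmonoid (outside (insert m S)) :=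
    mul_mem (fun c hc => hh₂fix c (Set.mem_insert_of_mem _ hc)) (mul_mem hh₁fix hgfix)
  refine ⟨h₂ * h₁, mul_mem hh₂E hh₁E, ?_⟩
  rw [Matrix.mul_assoc]
  rintro (c | c) hc <;> by_cases hcm : c = m
  · rw [hcm, ← mulVec_mulVec, hg₁e, hh₂fix _ (Set.mem_insert _ _)]
  · exact hfix _ (by simpa [hcm] using hc)
  · rw [hcm, ← mulVec_mulVec, hh₂]
  · exact hfix _ (by simpa [hcm] using hc)

lemma mem_elementarySubmonoid_of_mem_fixingSubmonoid {k : Type*} [Field k] {l : ℕ}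
    (T : Finset (Fin l)) : ∀ g ∈ symplecticGroup (Fin l) k,
      g ∈ fixingSubmonoid (outside T) → g ∈ elementarySubmonoid k l := by
  induction T using Finset.induction_on with
  | empty =>
    intro g _ hg
    rw [eq_one_of_mem_fixingSubmonoid_univ fun c _ => hg c (by rcases c <;> simp)]
    exact one_mem _
  | insert m S _ ih =>
    intro g hgSp hgfix
    obtain ⟨h, hhE, hhg⟩ := exists_mul_mem_fixingSubmonoid hgSp hgfix
    obtain ⟨h', hh'E, hh'⟩ := exists_mul_eq_one_of_mem_elementarySubmonoid hhE
    have hg : g = h' * (h * g) := by rw [← Matrix.mul_assoc, hh', Matrix.one_mul]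
    rw [hg]
    exact mul_mem hh'E (ih _ (mul_mem (elementarySubmonoid_le_symplecticGroup hhE) hgSp) hhg)

theorem stmt14_general (k : Type*) [Field k] (l : ℕ)
    (g : Matrix (Fin l ⊕ Fin l) (Fin l ⊕ Fin l) k)
    (hg : gᵀ * fromBlocks 0 1 (-1) 0 * g = fromBlocks 0 1 (-1) 0) :
    ∃ L : List (Matrix (Fin l ⊕ Fin l) (Fin l ⊕ Fin l) k),
      (∀ x ∈ L, IsElementarySymplectic k l x) ∧ L.prod = g := by
  have hJ : J (Fin l) k = -fromBlocks 0 1 (-1) 0 := by simp [J, fromBlocks_neg]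
  have hgSp : g ∈ symplecticGroup (Fin l) k := by
    rw [SymplecticGroup.mem_iff', hJ, Matrix.mul_neg, Matrix.neg_mul, hg]
  refine Submonoid.exists_list_of_mem_closure
    (mem_elementarySubmonoid_of_mem_fixingSubmonoid Finset.univ g hgSp fun c hc => ?_)
  rcases c with c | c <;> simp at hc

/-- For l ≥ 2, every element of Sp(2l,k) is a finite product of elementary
symplectic matrices. -/
theorem stmt14 (k : Type*) [Field k] (l : ℕ) (hl : 2 ≤ l)
    (g : Matrix (Fin l ⊕ Fin l) (Fin l ⊕ Fin l) k)
    (hg : gᵀ * fromBlocks 0 1 (-1) 0 * g = fromBlocks 0 1 (-1) 0) :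
    ∃ L : List (Matrix (Fin l ⊕ Fin l) (Fin l ⊕ Fin l) k),
      (∀ x ∈ L, IsElementarySymplectic k l x) ∧ L.prod = g :=
  stmt14_general k l g hg
end

section
/- Let k be a field of characteristic ≠ 2 and g a unipotent element of O(d,k) (split form). Then the spinor norm Θ(g) is trivial, i.e., Θ(g) = 1̄ in k×/(k×)². -/
/-!
In characteristic `≠ 2` a unipotent `g` has a unipotent square root `a = p(g)` that is a
polynomial in `g` (Newton's iteration for `√X` at `X = 1`, truncated at the nilpotency index).
From `gᵀβg = β` we get `gᵀβ = βg⁻¹`, hence `aᵀβ = β p(g⁻¹)`, and `p(g⁻¹) a = 1` because it is a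
unipotent square root of `g⁻¹g = 1`. So `a` is orthogonal and `Θ g = Θ a * Θ a` is a square.
-/

open Matrix Polynomial

namespace Polynomial

variable {R : Type*} [CommRing R]

theorem exists_dvd_sq_sub_X (h2 : IsUnit (2 : R)) (n : ℕ) :
    ∃ p : R[X], X - 1 ∣ p - 1 ∧ (X - 1) ^ n ∣ p ^ 2 - X := by
  obtain ⟨c, hc⟩ := h2.exists_right_inv
  have hc' : (2 : R[X]) * C c = 1 := by rw [← C_ofNat, ← C_mul, hc, C_1]
  induction n with
  | zero => exact ⟨1, by simp, by simp⟩
  | succ n ih =>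
    obtain ⟨p, hp1, hp⟩ := ih
    have hsq : X - 1 ∣ p ^ 2 - X := by
      rw [show p ^ 2 - X = (p - 1) * (p + 1) - (X - 1) by ring]
      exact dvd_sub (dvd_mul_of_dvd_left hp1 _) dvd_rfl
    -- Newton's step for `√X` at `X = 1`: `p ↦ p - (p² - X) / 2`.
    refine ⟨p - C c * (p ^ 2 - X), ?_, ?_⟩
    · rw [sub_right_comm]
      exact dvd_sub hp1 (dvd_mul_of_dvd_right hsq _)
    · have newton : (p - C c * (p ^ 2 - X)) ^ 2 - X
          = (p ^ 2 - X) * (-(p - 1) + C c ^ 2 * (p ^ 2 - X)) := by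
        linear_combination (-(p * (p ^ 2 - X))) * hc'
      rw [newton, pow_succ]
      exact mul_dvd_mul hp (dvd_add (dvd_neg.mpr hp1) (dvd_mul_of_dvd_right hsq _))

end Polynomial

section Algebra

variable {R A : Type*}

theorem SemiconjBy.aeval [CommSemiring R] [Semiring A] [Algebra R A] {a x y : A}
    (h : SemiconjBy a x y) (p : R[X]) : SemiconjBy a (aeval x p) (aeval y p) := by
  induction p using Polynomial.induction_on' with
  | add p q hp hq => simpa only [map_add] using hp.add_right hq
  | monomial n r =>
    simpa only [aeval_monomial, ← Algebra.smul_def] using (h.pow_right n).smul_right r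

variable [CommRing R] [Ring A] [Algebra R A]

theorem aeval_sq_eq_of_dvd_sq_sub_X {p : R[X]} {n : ℕ} (hp : (X - 1) ^ n ∣ p ^ 2 - X)
    {x : A} (hx : (x - 1) ^ n = 0) : aeval x p ^ 2 = x := by
  obtain ⟨s, hs⟩ := hp
  have := congrArg (aeval x) hs
  rw [map_sub, map_pow, aeval_X, map_mul, map_pow, map_sub, aeval_X, map_one, hx,
    zero_mul] at this
  exact sub_eq_zero.mp this

theorem isNilpotent_aeval_sub_one {p : R[X]} (hp : X - 1 ∣ p - 1) {x : A}
    (hx : IsNilpotent (x - 1)) : IsNilpotent (aeval x p - 1) := by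
  obtain ⟨r, hr⟩ := hp
  have hfactor : aeval x p - 1 = aeval x (X - 1 : R[X]) * aeval x r := by
    rw [← map_mul, ← hr, map_sub, map_one]
  rw [hfactor]
  refine ((Commute.all (X - 1 : R[X]) r).map (aeval x)).isNilpotent_mul_right ?_
  rwa [map_sub, aeval_X, map_one]

end Algebra

section Unipotent

variable {A : Type*} [Ring A]

theorem isNilpotent_mul_sub_one_of_commute {x y : A} (hxy : Commute x y)
    (hx : IsNilpotent (x - 1)) (hy : IsNilpotent (y - 1)) : IsNilpotent (x * y - 1) := by
  have hx' : Commute x (y - 1) := hxy.sub_right (Commute.one_right x)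
  have hxy' : Commute (x - 1) (y - 1) := hx'.sub_left (Commute.one_left _)
  have hc : Commute (x * (y - 1)) (x - 1) :=
    ((Commute.refl x).sub_right (Commute.one_right x)).mul_left hxy'.symm
  rw [show x * y - 1 = x * (y - 1) + (x - 1) by noncomm_ring]
  exact hc.isNilpotent_add (hx'.isNilpotent_mul_left hy) hx

theorem Units.isNilpotent_inv_sub_one (u : Aˣ) (hu : IsNilpotent ((u : A) - 1)) :
    IsNilpotent ((↑u⁻¹ : A) - 1) := by
  rw [show (↑u⁻¹ : A) - 1 = -(↑u⁻¹ * ((u : A) - 1)) by rw [mul_sub, u.inv_mul]; noncomm_ring]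
  exact (((Commute.refl (u : A)).units_inv_left).sub_right (Commute.one_right _)
    |>.isNilpotent_mul_left hu).neg

theorem eq_one_of_sq_eq_one_of_isNilpotent_sub_one (h2 : IsUnit (2 : A)) {w : A}
    (hw : IsNilpotent (w - 1)) (hw2 : w ^ 2 = 1) : w = 1 := by
  have hunit : IsUnit (w + 1) := by
    rw [show w + 1 = w - 1 + 2 by rw [← one_add_one_eq_two]; abel]
    exact hw.isUnit_add_right_of_commute h2 (.ofNat_right _ 2)
  have hzero : (w + 1) * (w - 1) = 0 := by
    rw [show (w + 1) * (w - 1) = w ^ 2 - 1 by noncomm_ring, hw2, sub_self]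
  exact sub_eq_zero.mp (hunit.mul_right_eq_zero.mp hzero)

end Unipotent

theorem Matrix.transpose_aeval {R n : Type*} [CommSemiring R] [Fintype n] [DecidableEq n]
    (M : Matrix n n R) (p : R[X]) : (aeval M p)ᵀ = aeval Mᵀ p := by
  induction p using Polynomial.induction_on' with
  | add p q hp hq => simp only [map_add, transpose_add, hp, hq]
  | monomial n r => simp only [aeval_monomial, ← Algebra.smul_def, transpose_smul, transpose_pow]

theorem Matrix.exists_mul_self_eq_of_isNilpotent_sub_one {R n : Type*} [CommRing R] [Fintype n]
    [DecidableEq n] (h2 : IsUnit (2 : R)) {β g : Matrix n n R} (hgO : gᵀ * β * g = β)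
    (hg : IsNilpotent (g - 1)) : ∃ a, aᵀ * β * a = β ∧ a * a = g := by
  obtain ⟨u, rfl⟩ : IsUnit g := by simpa using hg.isUnit_one_add
  set v : Matrix n n R := ↑u⁻¹
  have hv : IsNilpotent (v - 1) := u.isNilpotent_inv_sub_one hg
  obtain ⟨m, hm⟩ := hg
  obtain ⟨m', hm'⟩ := hv
  obtain ⟨p, hp1, hp⟩ := exists_dvd_sq_sub_X h2 (m + m')
  have hsqrt_g : aeval (u : Matrix n n R) p ^ 2 = u :=
    aeval_sq_eq_of_dvd_sq_sub_X hp (pow_eq_zero_of_le (m.le_add_right m') hm)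
  have hsqrt_v : aeval v p ^ 2 = v :=
    aeval_sq_eq_of_dvd_sq_sub_X hp (pow_eq_zero_of_le (m'.le_add_left m) hm')
  have hcomm : Commute (aeval v p) (aeval (u : Matrix n n R) p) := by
    simpa only [aeval_eq_smeval] using smeval_commute R p p (Commute.refl _).units_inv_left
  -- A unipotent square root of `1` in a ring where `2` is a unit is `1` itself.
  have hinv : aeval v p * aeval (u : Matrix n n R) p = 1 := by
    refine eq_one_of_sq_eq_one_of_isNilpotent_sub_one (h2.map (algebraMap R _))
      (isNilpotent_mul_sub_one_of_commute hcomm (isNilpotent_aeval_sub_one hp1 ⟨m', hm'⟩)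
        (isNilpotent_aeval_sub_one hp1 ⟨m, hm⟩)) ?_
    rw [hcomm.mul_pow, hsqrt_v, hsqrt_g, u.inv_mul]
  have hsemiconj : SemiconjBy β v (u : Matrix n n R)ᵀ := by
    rw [SemiconjBy]
    nth_rw 1 [← hgO]
    rw [mul_assoc _ _ v, u.mul_inv, mul_one]
  refine ⟨aeval (u : Matrix n n R) p, ?_, by rw [← sq, hsqrt_g]⟩
  rw [transpose_aeval, ← (hsemiconj.aeval p).eq, mul_assoc, hinv, mul_one]

theorem QuotientGroup.mul_self_eq_one_of_closure_isSquare {G : Type*} [CommGroup G]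
    (q : G ⧸ Subgroup.closure {x : G | IsSquare x}) : q * q = 1 := by
  induction q using QuotientGroup.induction_on with
  | H x => exact (QuotientGroup.eq_one_iff _).mpr (Subgroup.subset_closure ⟨x, rfl⟩)

theorem stmt18_general (k : Type*) [Field k] (hchar : (2 : k) ≠ 0) (d : ℕ)
    (β : Matrix (Fin d) (Fin d) k)
    (Θ : Matrix (Fin d) (Fin d) k → kˣ ⧸ Subgroup.closure {x : kˣ | IsSquare x})
    (hΘmul : ∀ a b, aᵀ * β * a = β → bᵀ * β * b = β → Θ (a * b) = Θ a * Θ b)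
    (g : Matrix (Fin d) (Fin d) k)
    (hgO : gᵀ * β * g = β) (hgu : IsNilpotent (g - 1)) :
    Θ g = 1 := by
  obtain ⟨a, ha, rfl⟩ := exists_mul_self_eq_of_isNilpotent_sub_one hchar.isUnit hgO hgu
  rw [hΘmul a a ha ha]
  exact QuotientGroup.mul_self_eq_one_of_closure_isSquare _

/-- The spinor norm (the homomorphism Θ : O(d,k) → k×/(k×)² with Θ(ρ_v) = Q(v)
mod squares for reflections) is trivial on unipotent elements. -/
theorem stmt18 (k : Type*) [Field k] (hchar : (2 : k) ≠ 0) (d : ℕ)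
    (β : Matrix (Fin d) (Fin d) k) (hβsymm : βᵀ = β) (hβinv : IsUnit β)
    (Q : (Fin d → k) → k) (hQ : ∀ v, Q v = (v ⬝ᵥ β.mulVec v) / 2)
    (ρ : (Fin d → k) → Matrix (Fin d) (Fin d) k)
    (hρ : ∀ v, ρ v = 1 - (Q v)⁻¹ • vecMulVec v (β.mulVec v))
    (Θ : Matrix (Fin d) (Fin d) k → kˣ ⧸ Subgroup.closure {x : kˣ | IsSquare x})
    (hΘmul : ∀ a b, aᵀ * β * a = β → bᵀ * β * b = β → Θ (a * b) = Θ a * Θ b)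
    (hΘρ : ∀ v (hv : Q v ≠ 0), Θ (ρ v) = QuotientGroup.mk (Units.mk0 (Q v) hv))
    (g : Matrix (Fin d) (Fin d) k)
    (hgO : gᵀ * β * g = β) (hgu : IsNilpotent (g - 1)) :
    Θ g = 1 :=
  stmt18_general k hchar d β Θ hΘmul g hgO hgu
end

section
/- Let k be a field and P ≤ Sp(2l,k) the Siegel maximal parabolic subgroup of block upper-triangular symplectic matrices [[A,B],[0,D]]. Define ω_i = w_{1,−1}···w_{i,−i} for 1 ≤ i ≤ l and ω_0 = I, where w_{j,−j} = I + e_{j,−j} − e_{−j,j} − e_{j,j} − e_{−j,−j}. Then Sp(2l,k) is the disjoint union of the double cosets P ω_i P for 0 ≤ i ≤ l; in particular |P\Sp(2l,k)/P| = l + 1. -/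
open Matrix

/-!
The double coset of `g = [[A, B], [C, D]]` is detected by the rank of `C`: for `p, q ∈ P` the
lower-left block of `p * g * q` is `D_p * C * A_q`, and `A_q`, `D_p` are invertible because
`A_pᵀ D_p = 1` for `p ∈ P`; the lower-left block of `ω_r` is `-J_r`, of rank `r`, where
`J_r = diag(1, …, 1, 0, …, 0)` has `r` ones.

Conversely, if `rank C = r`, then `U C V = J_r` for invertible `U`, `V`, and multiplying `g` on
both sides by the Levi elements `diag(-U⁻ᵀ, -U)` and `diag(V, V⁻ᵀ)` of `P` gives `C = -J_r`.
The symplectic relation `Aᵀ C = Cᵀ A` then makes `S = J_r A` symmetric, and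
`ω_r⁻¹ [[1, S], [0, 1]] g` has zero lower-left block, i.e. lies in `P`.
-/

namespace Matrix

lemma toBlocks₂₁_mul {m n α : Type*} [Fintype m] [Fintype n] [NonUnitalNonAssocSemiring α]
    (x y : Matrix (m ⊕ n) (m ⊕ n) α) :
    toBlocks₂₁ (x * y) = toBlocks₂₁ x * toBlocks₁₁ y + toBlocks₂₂ x * toBlocks₂₁ y := by
  conv_lhs => rw [← fromBlocks_toBlocks x, ← fromBlocks_toBlocks y, fromBlocks_multiply]
  rfl

lemma rank_neg {m R : Type*} [Fintype m] [CommRing R] (A : Matrix m m R) :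
    (-A).rank = A.rank := by
  rw [← neg_one_smul R A, rank_smul_of_mem_nonZeroDivisors _ isUnit_one.neg.mem_nonZeroDivisors]

section Rank

variable {m : Type*} [Fintype m] [DecidableEq m]

lemma submatrix_equiv_self_eq_permMatrix_mul_mul {R : Type*} [Semiring R]
    (M : Matrix m m R) (σ : Equiv.Perm m) :
    M.submatrix σ σ = σ.permMatrix R * M * σ⁻¹.permMatrix R := by
  rw [PEquiv.toMatrix_toPEquiv_mul, PEquiv.mul_toMatrix_toPEquiv, submatrix_submatrix]
  rfl

lemma isUnit_permMatrix {R : Type*} [CommRing R] (σ : Equiv.Perm m) :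
    IsUnit (σ.permMatrix R) := by
  rw [isUnit_iff_isUnit_det, det_permutation]
  exact (Equiv.Perm.sign σ).isUnit.map (Int.castRingHom R)

theorem exists_units_mul_mul_eq_of_rank_eq {K : Type*} [Field K] {A B : Matrix m m K}
    (h : A.rank = B.rank) : ∃ X Y : (Matrix m m K)ˣ, (X : Matrix m m K) * A * Y = B := by
  obtain ⟨V, U, e, ⟨V, rfl⟩, ⟨U, rfl⟩, hA⟩ := h ▸ exists_rank_normal_form A
  obtain ⟨V', U', e', ⟨V', rfl⟩, ⟨U', rfl⟩, hB⟩ := exists_rank_normal_form B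
  -- both normal forms are the same block matrix, reindexed by `e` and by `e'`
  set σ : Equiv.Perm m := e'.trans e.symm
  obtain ⟨P, hP⟩ := isUnit_permMatrix (R := K) σ
  obtain ⟨Q, hQ⟩ := isUnit_permMatrix (R := K) σ⁻¹
  refine ⟨V'⁻¹ * P * V, U * Q * U'⁻¹, ?_⟩
  have hσ : e ∘ σ = e' := funext fun i => by simp [σ]
  calc _ = (↑(V'⁻¹) : Matrix m m K) * (P * (V * A * U) * Q) * ↑U'⁻¹ := by
        simp only [Units.val_mul, mul_assoc]
    _ = B := by
        rw [hA, hP, hQ, ← submatrix_equiv_self_eq_permMatrix_mul_mul, submatrix_submatrix, hσ,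
          ← hB]
        simp [mul_assoc]

end Rank

section Weyl

variable {n R : Type*} [DecidableEq n] [CommRing R]

def weylMatrix (E : Matrix n n R) : Matrix (n ⊕ n) (n ⊕ n) R :=
  fromBlocks (1 - E) E (-E) (1 - E)

lemma weylMatrix_zero : weylMatrix (0 : Matrix n n R) = 1 := by
  simp [weylMatrix, fromBlocks_one]

lemma weylMatrix_single (j : n) :
    weylMatrix (single j j (1 : R)) = 1 + single (Sum.inl j) (Sum.inr j) 1
      - single (Sum.inr j) (Sum.inl j) 1 - single (Sum.inl j) (Sum.inl j) 1
      - single (Sum.inr j) (Sum.inr j) 1 := by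
  ext (a | a) (b | b) <;> by_cases ha : a = j <;> by_cases hb : b = j <;>
    simp [weylMatrix, single_apply, one_apply, ha, hb]

variable [Fintype n]

lemma weylMatrix_mul_weylMatrix {E F : Matrix n n R} (h : E * F = 0) :
    weylMatrix E * weylMatrix F = weylMatrix (E + F) := by
  rw [weylMatrix, weylMatrix, weylMatrix, fromBlocks_multiply]
  congr 1 <;> simp only [sub_mul, mul_sub, one_mul, mul_one, neg_mul, mul_neg, h] <;> abel

lemma list_prod_map_ite_weylMatrix_single (p : n → Prop) [DecidablePred p] {L : List n}
    (hL : L.Nodup) :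
    (L.map fun j => if p j then weylMatrix (single j j (1 : R)) else 1).prod =
      weylMatrix (diagonal fun j => if j ∈ L ∧ p j then 1 else 0) := by
  induction L with
  | nil => simp [weylMatrix_zero]
  | cons a L ih =>
    rw [List.nodup_cons] at hL
    rw [List.map_cons, List.prod_cons, ih hL.2]
    split_ifs with ha
    · rw [← diagonal_single, weylMatrix_mul_weylMatrix, diagonal_add]
      · congr 2
        funext i
        by_cases hi : i = a <;> simp [hi, ha, hL.1]
      · rw [diagonal_mul_diagonal, ← diagonal_zero]
        congr 1
        funext i
        by_cases hi : i = a <;> simp [hi, hL.1]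
    · rw [one_mul]
      congr 2
      funext i
      by_cases hi : i = a <;> simp [hi, ha]

end Weyl

def projFirst (R : Type*) [Zero R] [One R] (l r : ℕ) : Matrix (Fin l) (Fin l) R :=
  diagonal fun j => if (j : ℕ) < r then 1 else 0

section ProjFirst

variable {R : Type*} [CommRing R] {l : ℕ}

lemma projFirst_transpose (r : ℕ) : (projFirst R l r)ᵀ = projFirst R l r :=
  diagonal_transpose _

lemma projFirst_mul_self (r : ℕ) : projFirst R l r * projFirst R l r = projFirst R l r := by
  rw [projFirst, diagonal_mul_diagonal]
  congr 1
  funext j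
  split_ifs <;> simp

lemma rank_projFirst {K : Type*} [Field K] {r : ℕ} (hr : r ≤ l) : (projFirst K l r).rank = r := by
  classical
  rw [projFirst, rank_diagonal, Fintype.card_subtype]
  simpa [hr] using Fin.card_filter_val_lt (n := l) (m := r)

end ProjFirst

end Matrix

namespace SymplecticGroup

section Siegel

variable {n R : Type*} [Fintype n] [DecidableEq n] [CommRing R]

lemma transpose_mul_fromBlocks_mul_eq_iff {g : Matrix (n ⊕ n) (n ⊕ n) R} :
    gᵀ * fromBlocks 0 1 (-1) 0 * g = fromBlocks 0 1 (-1) 0 ↔ g ∈ symplecticGroup n R := by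
  have hJ : (fromBlocks 0 1 (-1) 0 : Matrix (n ⊕ n) (n ⊕ n) R) = -J n R := by
    simp [J, fromBlocks_neg]
  rw [hJ, mem_iff', mul_neg, neg_mul, neg_inj]

lemma fromBlocks_zero₂₁_mem_iff {A B D : Matrix n n R} :
    fromBlocks A B 0 D ∈ symplecticGroup n R ↔ Bᵀ * D = Dᵀ * B ∧ Aᵀ * D = 1 := by
  simp [fromBlocks_mem_iff]

lemma coe_inv_eq_fromBlocks (g : symplecticGroup n R) :
    (↑g⁻¹ : Matrix (n ⊕ n) (n ⊕ n) R) =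
      fromBlocks (toBlocks₂₂ (g : Matrix (n ⊕ n) (n ⊕ n) R))ᵀ
        (-(toBlocks₁₂ (g : Matrix (n ⊕ n) (n ⊕ n) R))ᵀ)
        (-(toBlocks₂₁ (g : Matrix (n ⊕ n) (n ⊕ n) R))ᵀ)
        (toBlocks₁₁ (g : Matrix (n ⊕ n) (n ⊕ n) R))ᵀ := by
  rw [coe_inv, J, ← fromBlocks_toBlocks (g : Matrix (n ⊕ n) (n ⊕ n) R), fromBlocks_transpose,
    fromBlocks_neg, fromBlocks_multiply, fromBlocks_multiply]
  simp

lemma weylMatrix_mem {E : Matrix n n R} (hE : Eᵀ = E) (hEE : E * E = E) :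
    weylMatrix E ∈ symplecticGroup n R := by
  rw [weylMatrix, fromBlocks_mem_iff]
  simp only [transpose_sub, transpose_one, transpose_neg, hE]
  refine ⟨?_, ?_, ?_⟩ <;>
    simp only [sub_mul, mul_sub, one_mul, mul_one, neg_mul, mul_neg, hEE] <;> abel

variable (n R) in
def siegelParabolic : Subgroup (symplecticGroup n R) where
  carrier := {g | toBlocks₂₁ (g : Matrix (n ⊕ n) (n ⊕ n) R) = 0}
  mul_mem' {x y} hx hy := by
    simp_all [Submonoid.coe_mul, toBlocks₂₁_mul]
  one_mem' := by
    ext; simp [toBlocks₂₁, one_apply]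
  inv_mem' {g} hg := by
    simp_all [coe_inv_eq_fromBlocks]

lemma mem_siegelParabolic_iff {g : symplecticGroup n R} :
    g ∈ siegelParabolic n R ↔ toBlocks₂₁ (g : Matrix (n ⊕ n) (n ⊕ n) R) = 0 := Iff.rfl

lemma transpose_toBlocks₁₁_mul_toBlocks₂₂ {p : symplecticGroup n R}
    (hp : p ∈ siegelParabolic n R) :
    (toBlocks₁₁ (p : Matrix (n ⊕ n) (n ⊕ n) R))ᵀ * toBlocks₂₂ (p : Matrix (n ⊕ n) (n ⊕ n) R) =
      1 := by
  have h := p.2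
  rw [← fromBlocks_toBlocks (p : Matrix (n ⊕ n) (n ⊕ n) R), mem_siegelParabolic_iff.1 hp,
    fromBlocks_zero₂₁_mem_iff] at h
  exact h.2

lemma toBlocks₂₁_mul_mul {p q : symplecticGroup n R} (hp : p ∈ siegelParabolic n R)
    (hq : q ∈ siegelParabolic n R) (g : symplecticGroup n R) :
    toBlocks₂₁ (↑(p * g * q) : Matrix (n ⊕ n) (n ⊕ n) R) =
      toBlocks₂₂ (p : Matrix (n ⊕ n) (n ⊕ n) R) * toBlocks₂₁ (g : Matrix (n ⊕ n) (n ⊕ n) R) *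
        toBlocks₁₁ (q : Matrix (n ⊕ n) (n ⊕ n) R) := by
  simp only [Submonoid.coe_mul, toBlocks₂₁_mul, mem_siegelParabolic_iff.1 hp,
    mem_siegelParabolic_iff.1 hq, zero_mul, zero_add, mul_zero, add_zero]

lemma rank_toBlocks₂₁_mul_mul {p q : symplecticGroup n R} (hp : p ∈ siegelParabolic n R)
    (hq : q ∈ siegelParabolic n R) (g : symplecticGroup n R) :
    (toBlocks₂₁ (↑(p * g * q) : Matrix (n ⊕ n) (n ⊕ n) R)).rank =
      (toBlocks₂₁ (g : Matrix (n ⊕ n) (n ⊕ n) R)).rank := by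
  have hq' := isUnit_det_of_right_inverse (transpose_toBlocks₁₁_mul_toBlocks₂₂ hq)
  rw [det_transpose] at hq'
  rw [toBlocks₂₁_mul_mul hp hq, rank_mul_eq_left_of_isUnit_det _ _ hq',
    rank_mul_eq_right_of_isUnit_det _ _
      (isUnit_det_of_left_inverse (transpose_toBlocks₁₁_mul_toBlocks₂₂ hp))]

theorem exists_mem_siegelParabolic_mul_weylMatrix_mul {E : Matrix n n R} (hE : Eᵀ = E)
    (hEE : E * E = E) (g : symplecticGroup n R)
    (hg : toBlocks₂₁ (g : Matrix (n ⊕ n) (n ⊕ n) R) = -E) :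
    ∃ p ∈ siegelParabolic n R, ∃ q ∈ siegelParabolic n R,
      g = p * ⟨weylMatrix E, weylMatrix_mem hE hEE⟩ * q := by
  set A := toBlocks₁₁ (g : Matrix (n ⊕ n) (n ⊕ n) R)
  have hAE : Aᵀ * E = E * A := by
    have h := g.2
    rw [← fromBlocks_toBlocks (g : Matrix (n ⊕ n) (n ⊕ n) R), hg, fromBlocks_mem_iff] at h
    simpa [hE] using h.1
  have hEAE : E * A * E = E * A := by rw [← hAE, mul_assoc, hEE, hAE]
  have hS : (E * A)ᵀ = E * A := by rw [transpose_mul, hE, hAE]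
  let u : symplecticGroup n R :=
    ⟨fromBlocks 1 (E * A) 0 1, fromBlocks_zero₂₁_mem_iff.2 (by simp [hS])⟩
  have hu : u ∈ siegelParabolic n R := toBlocks_fromBlocks₂₁ _ _ _ _
  let w : symplecticGroup n R := ⟨weylMatrix E, weylMatrix_mem hE hEE⟩
  refine ⟨u⁻¹, inv_mem hu, w⁻¹ * u * g, ?_, show g = u⁻¹ * w * (w⁻¹ * u * g) by group⟩
  have hw : (↑w⁻¹ : Matrix (n ⊕ n) (n ⊕ n) R) = fromBlocks (1 - E) (-E) E (1 - E) := by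
    simp [coe_inv_eq_fromBlocks, w, weylMatrix, hE]
  rw [mem_siegelParabolic_iff, Submonoid.coe_mul, Submonoid.coe_mul, hw,
    ← fromBlocks_toBlocks (g : Matrix (n ⊕ n) (n ⊕ n) R), hg]
  simp only [u, fromBlocks_multiply, toBlocks_fromBlocks₂₁, mul_one, mul_zero, add_zero, add_mul,
    sub_mul, one_mul, mul_neg, ← mul_assoc, hEE, hEAE]
  abel

theorem exists_mem_siegelParabolic_mul_weylMatrix_mul_of_units {E : Matrix n n R} (hE : Eᵀ = E)
    (hEE : E * E = E) (g : symplecticGroup n R) (U V : (Matrix n n R)ˣ)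
    (hUV : (U : Matrix n n R) * toBlocks₂₁ (g : Matrix (n ⊕ n) (n ⊕ n) R) * V = E) :
    ∃ p ∈ siegelParabolic n R, ∃ q ∈ siegelParabolic n R,
      g = p * ⟨weylMatrix E, weylMatrix_mem hE hEE⟩ * q := by
  let a : symplecticGroup n R := ⟨fromBlocks (-(↑U⁻¹ : Matrix n n R)ᵀ) 0 0 (-↑U),
    fromBlocks_zero₂₁_mem_iff.2 ⟨by simp, by simp⟩⟩
  let b : symplecticGroup n R := ⟨fromBlocks ↑V 0 0 (↑V⁻¹ : Matrix n n R)ᵀ,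
    fromBlocks_zero₂₁_mem_iff.2 ⟨by simp, by rw [← transpose_mul, Units.inv_mul, transpose_one]⟩⟩
  have ha : a ∈ siegelParabolic n R := toBlocks_fromBlocks₂₁ _ _ _ _
  have hb : b ∈ siegelParabolic n R := toBlocks_fromBlocks₂₁ _ _ _ _
  have hagb : toBlocks₂₁ (↑(a * g * b) : Matrix (n ⊕ n) (n ⊕ n) R) = -E := by
    rw [toBlocks₂₁_mul_mul ha hb]
    simp [a, b, ← hUV]
  obtain ⟨p, hp, q, hq, h⟩ := exists_mem_siegelParabolic_mul_weylMatrix_mul hE hEE _ hagb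
  refine ⟨a⁻¹ * p, mul_mem (inv_mem ha) hp, q * b⁻¹, mul_mem hq (inv_mem hb), ?_⟩
  calc g = a⁻¹ * (a * g * b) * b⁻¹ := by group
    _ = _ := by rw [h]; group

lemma exists_mul_mul_iff_exists_mem_siegelParabolic {g x : symplecticGroup n R} :
    (∃ p q : Matrix (n ⊕ n) (n ⊕ n) R,
      (p ∈ symplecticGroup n R ∧ ∀ i j, p (Sum.inr i) (Sum.inl j) = 0) ∧
      (q ∈ symplecticGroup n R ∧ ∀ i j, q (Sum.inr i) (Sum.inl j) = 0) ∧
      (g : Matrix (n ⊕ n) (n ⊕ n) R) = p * x * q) ↔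
    ∃ p ∈ siegelParabolic n R, ∃ q ∈ siegelParabolic n R, g = p * x * q := by
  constructor
  · rintro ⟨p, q, ⟨hp, hp₀⟩, ⟨hq, hq₀⟩, h⟩
    exact ⟨⟨p, hp⟩, ext hp₀, ⟨q, hq⟩, ext hq₀, Subtype.ext h⟩
  · rintro ⟨p, hp, q, hq, rfl⟩
    exact ⟨p, q, ⟨p.2, fun i j => congr_fun₂ hp i j⟩, ⟨q.2, fun i j => congr_fun₂ hq i j⟩, rfl⟩

end Siegel

variable {R : Type*} [CommRing R] {l : ℕ}

/-- The element `ω_r = w_{1,-1} ⋯ w_{r,-r}`. -/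
def weyl (r : ℕ) : symplecticGroup (Fin l) R :=
  ⟨weylMatrix (projFirst R l r), weylMatrix_mem (projFirst_transpose r) (projFirst_mul_self r)⟩

theorem exists_mem_siegelParabolic_mul_weyl_mul_iff {K : Type*} [Field K]
    (g : symplecticGroup (Fin l) K) {r : ℕ} (hr : r ≤ l) :
    (∃ p ∈ siegelParabolic (Fin l) K, ∃ q ∈ siegelParabolic (Fin l) K, g = p * weyl r * q) ↔
      (toBlocks₂₁ (g : Matrix (Fin l ⊕ Fin l) (Fin l ⊕ Fin l) K)).rank = r := by
  constructor
  · rintro ⟨p, hp, q, hq, rfl⟩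
    rw [rank_toBlocks₂₁_mul_mul hp hq]
    simp [weyl, weylMatrix, rank_neg, rank_projFirst hr]
  · intro h
    obtain ⟨U, V, hUV⟩ := exists_units_mul_mul_eq_of_rank_eq (h.trans (rank_projFirst hr).symm)
    exact exists_mem_siegelParabolic_mul_weylMatrix_mul_of_units (projFirst_transpose r)
      (projFirst_mul_self r) g U V hUV

end SymplecticGroup

open SymplecticGroup

/-- The Siegel parabolic double coset decomposition of Sp(2l,k):
Sp(2l,k) = ⊔_{i=0}^{l} P ω_i P with ω_i = w_{1,-1} ⋯ w_{i,-i}. -/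
theorem stmt19 (k : Type*) [Field k] (l : ℕ)
    (P : Matrix (Fin l ⊕ Fin l) (Fin l ⊕ Fin l) k → Prop)
    (hP : ∀ p, P p ↔ (pᵀ * fromBlocks 0 1 (-1) 0 * p = fromBlocks 0 1 (-1) 0 ∧
        ∀ i j : Fin l, p (Sum.inr i) (Sum.inl j) = 0))
    (w : Fin l → Matrix (Fin l ⊕ Fin l) (Fin l ⊕ Fin l) k)
    (hw : ∀ j, w j = 1 + Matrix.single (Sum.inl j) (Sum.inr j) 1
        - Matrix.single (Sum.inr j) (Sum.inl j) 1
        - Matrix.single (Sum.inl j) (Sum.inl j) 1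
        - Matrix.single (Sum.inr j) (Sum.inr j) 1)
    (ω : Fin (l + 1) → Matrix (Fin l ⊕ Fin l) (Fin l ⊕ Fin l) k)
    (hω : ∀ i, ω i = ((List.finRange l).map
        (fun j => if j.val < i.val then w j else 1)).prod)
    (g : Matrix (Fin l ⊕ Fin l) (Fin l ⊕ Fin l) k)
    (hg : gᵀ * fromBlocks 0 1 (-1) 0 * g = fromBlocks 0 1 (-1) 0) :
    ∃! i : Fin (l + 1), ∃ p q, P p ∧ P q ∧ g = p * ω i * q := by
  have hω' : ∀ i : Fin (l + 1), ω i = ↑(weyl (R := k) (l := l) i) := by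
    intro i
    have hw' : w = fun j => weylMatrix (single j j 1) :=
      funext fun j => (hw j).trans (weylMatrix_single j).symm
    rw [hω, hw', list_prod_map_ite_weylMatrix_single _ (List.nodup_finRange l)]
    simp [weyl, projFirst]
  have hg' := transpose_mul_fromBlocks_mul_eq_iff.1 hg
  have key : ∀ i : Fin (l + 1),
      (∃ p q, P p ∧ P q ∧ g = p * ω i * q) ↔ (toBlocks₂₁ g).rank = i := by
    intro i
    simp_rw [hP, transpose_mul_fromBlocks_mul_eq_iff, hω']
    rw [← exists_mem_siegelParabolic_mul_weyl_mul_iff ⟨g, hg'⟩ (Nat.lt_succ_iff.1 i.2)]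
    exact exists_mul_mul_iff_exists_mem_siegelParabolic (g := ⟨g, hg'⟩)
  exact ⟨⟨_, Nat.lt_succ_of_le (rank_le_width _)⟩, (key _).2 rfl,
    fun i hi => Fin.ext ((key i).1 hi).symm⟩
end
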